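/- There exists a constant C > 0 such that for all 0 ≤ r ≤ t and all y, z ∈ ℝ, ∫₀ᵗ ∫_ℝ (G(t−s,x,y) − G(r−s,x,z))² dx ds ≤ C·(√(t−r) + |y−z|). -/

import Mathlib

/-!
Completing the square gives `G(a,x,y) G(b,x,z) = G(a+b,y,z) · G(ab/(a+b), x, m)` for some `m`,
so `∫ G(a,x,y) G(b,x,z) dx = G(a+b,y,z)` (Chapman–Kolmogorov). Expanding the square and
substituting `u = t + r - 2s` (and similarly) in time, the double integral becomes
`(2π)^{-1/2} (√(2t) + √(2r) - 2√(t+r) + 2√(t-r)) + ∫_{t-r}^{t+r} (G(u,y,y) - G(u,y,z)) du`.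
Concavity of `√` bounds the first term by `2 (2π)^{-1/2} √(t-r)`. The integrand of the second
is at most `(2πu)^{-1/2}` and at most `(2πu)^{-1/2} (y-z)²/(2u)`; using the first bound on
`[0, (y-z)²]` and the second beyond gives `3 (2π)^{-1/2} |y-z|`.
-/

open MeasureTheory Real

noncomputable def heatKernel (t x y : ℝ) : ℝ :=
  if 0 < t then (1 / Real.sqrt (2 * Real.pi * t)) * Real.exp (-(x - y) ^ 2 / (2 * t)) else 0

open Set ProbabilityTheory

lemma heatKernel_of_nonpos {t : ℝ} (ht : t ≤ 0) (x y : ℝ) : heatKernel t x y = 0 :=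
  if_neg ht.not_gt

lemma heatKernel_nonneg (t x y : ℝ) : 0 ≤ heatKernel t x y := by
  unfold heatKernel
  split_ifs <;> positivity

lemma heatKernel_eq_gaussianPDFReal {t : ℝ} (ht : 0 < t) (x y : ℝ) :
    heatKernel t x y = gaussianPDFReal y t.toNNReal x := by
  rw [heatKernel, if_pos ht, gaussianPDFReal, Real.coe_toNNReal _ ht.le, one_div]

lemma integrable_heatKernel (t y : ℝ) : Integrable (fun x => heatKernel t x y) := by
  rcases le_or_gt t 0 with ht | ht
  · simp [heatKernel_of_nonpos ht]
  · simp only [heatKernel_eq_gaussianPDFReal ht]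
    exact integrable_gaussianPDFReal _ _

lemma integral_heatKernel {t : ℝ} (ht : 0 < t) (y : ℝ) : ∫ x, heatKernel t x y = 1 := by
  simp only [heatKernel_eq_gaussianPDFReal ht]
  exact integral_gaussianPDFReal_eq_one _ (by simpa using ht)

lemma heatKernel_mul_heatKernel {a b : ℝ} (ha : 0 < a) (hb : 0 < b) (x y z : ℝ) :
    heatKernel a x y * heatKernel b x z =
      heatKernel (a + b) y z * heatKernel (a * b / (a + b)) x ((b * y + a * z) / (a + b)) := by
  have hab : 0 < a + b := by positivity
  simp only [heatKernel, if_pos ha, if_pos hb, if_pos hab,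
    if_pos (by positivity : 0 < a * b / (a + b))]
  have hsqrt :
      √(2 * π * a) * √(2 * π * b) = √(2 * π * (a + b)) * √(2 * π * (a * b / (a + b))) := by
    rw [← Real.sqrt_mul (by positivity), ← Real.sqrt_mul (by positivity)]
    congr 1
    field_simp
  have hexp : -(x - y) ^ 2 / (2 * a) + -(x - z) ^ 2 / (2 * b) =
      -(y - z) ^ 2 / (2 * (a + b)) +
        -(x - (b * y + a * z) / (a + b)) ^ 2 / (2 * (a * b / (a + b))) := by
    field_simp
    ring
  rw [mul_mul_mul_comm, ← Real.exp_add, hexp, Real.exp_add, one_div_mul_one_div, hsqrt,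
    ← one_div_mul_one_div]
  ring

lemma integral_heatKernel_mul_heatKernel {a b : ℝ} (ha : 0 < a) (hb : 0 < b) (y z : ℝ) :
    ∫ x, heatKernel a x y * heatKernel b x z = heatKernel (a + b) y z := by
  simp only [heatKernel_mul_heatKernel ha hb, integral_const_mul,
    integral_heatKernel (by positivity : 0 < a * b / (a + b)), mul_one]

lemma integrable_heatKernel_mul_heatKernel (a b y z : ℝ) :
    Integrable (fun x => heatKernel a x y * heatKernel b x z) := by
  rcases le_or_gt b 0 with hb | hb
  · simp [heatKernel_of_nonpos hb]
  rcases le_or_gt a 0 with ha | ha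
  · simp [heatKernel_of_nonpos ha]
  simp only [heatKernel_mul_heatKernel ha hb]
  exact (integrable_heatKernel _ _).const_mul _

lemma integral_heatKernel_sq (a y : ℝ) : ∫ x, heatKernel a x y ^ 2 = heatKernel (2 * a) y y := by
  rcases le_or_gt a 0 with ha | ha
  · simp [heatKernel_of_nonpos ha, heatKernel_of_nonpos (by linarith : 2 * a ≤ 0)]
  · simp only [sq, integral_heatKernel_mul_heatKernel ha ha, two_mul]

lemma integral_heatKernel_sub_sq {a b : ℝ} (ha : 0 < a) (hb : 0 < b) (y z : ℝ) :
    ∫ x, (heatKernel a x y - heatKernel b x z) ^ 2 =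
      heatKernel (2 * a) y y + heatKernel (2 * b) z z - 2 * heatKernel (a + b) y z := by
  have hexpand : ∀ x, (heatKernel a x y - heatKernel b x z) ^ 2 =
      heatKernel a x y * heatKernel a x y + heatKernel b x z * heatKernel b x z -
        2 * (heatKernel a x y * heatKernel b x z) := fun x => by ring
  have hI := integrable_heatKernel_mul_heatKernel
  simp only [hexpand]
  rw [integral_sub, integral_add (hI a a y y) (hI b b z z), integral_const_mul,
    integral_heatKernel_mul_heatKernel ha ha, integral_heatKernel_mul_heatKernel hb hb,
    integral_heatKernel_mul_heatKernel ha hb, ← two_mul, ← two_mul]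
  · exact (hI a a y y).add (hI b b z z)
  · exact (hI a b y z).const_mul 2

lemma integral_heatKernel_sub_sq_of_nonpos (a : ℝ) {b : ℝ} (hb : b ≤ 0) (y z : ℝ) :
    ∫ x, (heatKernel a x y - heatKernel b x z) ^ 2 = heatKernel (2 * a) y y := by
  simp only [heatKernel_of_nonpos hb, sub_zero, integral_heatKernel_sq]

-- At `u = 0` both sides vanish, as `0 ^ (-1/2) = 0` for `Real.rpow`.
lemma heatKernel_diag_eq_rpow {u : ℝ} (hu : 0 ≤ u) (y : ℝ) :
    heatKernel u y y = (√(2 * π))⁻¹ * u ^ (-(1 / 2) : ℝ) := by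
  rcases hu.eq_or_lt with rfl | hu
  · rw [heatKernel_of_nonpos le_rfl, Real.zero_rpow (by norm_num), mul_zero]
  · rw [heatKernel, if_pos hu, sub_self, zero_pow two_ne_zero, neg_zero, zero_div, Real.exp_zero,
      mul_one, Real.sqrt_mul (by positivity : (0 : ℝ) ≤ 2 * π) u, Real.rpow_neg hu.le,
      ← Real.sqrt_eq_rpow, one_div, mul_inv]

lemma heatKernel_le_heatKernel_diag (u y z : ℝ) : heatKernel u y z ≤ heatKernel u y y := by
  unfold heatKernel
  split_ifs with hu
  · rw [sub_self, zero_pow two_ne_zero, neg_zero, zero_div, Real.exp_zero]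
    gcongr
    exact Real.exp_le_one_iff.mpr
      (div_nonpos_of_nonpos_of_nonneg (neg_nonpos.mpr (sq_nonneg _)) (by positivity))
  · rfl

lemma heatKernel_diag_sub_le {u : ℝ} (hu : 0 < u) (y z : ℝ) :
    heatKernel u y y - heatKernel u y z ≤
      (√(2 * π))⁻¹ * ((y - z) ^ 2 / 2) * u ^ (-(3 / 2) : ℝ) := by
  have hdiag := heatKernel_diag_eq_rpow hu.le y
  have hoff : heatKernel u y z = heatKernel u y y * exp (-((y - z) ^ 2 / (2 * u))) := by
    rw [heatKernel, heatKernel, if_pos hu, if_pos hu, sub_self]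
    simp [neg_div]
  have hexp : 1 - exp (-((y - z) ^ 2 / (2 * u))) ≤ (y - z) ^ 2 / (2 * u) := by
    linarith [Real.add_one_le_exp (-((y - z) ^ 2 / (2 * u)))]
  have hrpow : u ^ (-(3 / 2) : ℝ) = u ^ (-(1 / 2) : ℝ) / u := by
    rw [← Real.rpow_sub_one hu.ne']
    norm_num
  calc heatKernel u y y - heatKernel u y z
      = heatKernel u y y * (1 - exp (-((y - z) ^ 2 / (2 * u)))) := by rw [hoff]; ring
    _ ≤ heatKernel u y y * ((y - z) ^ 2 / (2 * u)) :=
        mul_le_mul_of_nonneg_left hexp (heatKernel_nonneg _ _ _)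
    _ = (√(2 * π))⁻¹ * ((y - z) ^ 2 / 2) * u ^ (-(3 / 2) : ℝ) := by
        rw [hdiag, hrpow]
        field_simp

lemma measurable_heatKernel_time (y z : ℝ) : Measurable fun u => heatKernel u y z := by
  unfold heatKernel
  exact Measurable.ite measurableSet_Ioi (by fun_prop) measurable_const

lemma intervalIntegrable_heatKernel_diag {a b : ℝ} (ha : 0 ≤ a) (hb : 0 ≤ b) (y : ℝ) :
    IntervalIntegrable (fun u => heatKernel u y y) volume a b := by
  refine ((intervalIntegral.intervalIntegrable_rpow' (r := -(1 / 2)) (by norm_num)).const_mul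
    (√(2 * π))⁻¹).congr fun u hu => (heatKernel_diag_eq_rpow ?_ y).symm
  exact le_trans (le_min ha hb) (uIoc_subset_uIcc hu).1

lemma intervalIntegrable_heatKernel_time {a b : ℝ} (ha : 0 ≤ a) (hb : 0 ≤ b) (y z : ℝ) :
    IntervalIntegrable (fun u => heatKernel u y z) volume a b :=
  (intervalIntegrable_heatKernel_diag ha hb y).mono_fun
    (measurable_heatKernel_time y z).aestronglyMeasurable
    (ae_of_all _ fun u => by
      simp only [norm_of_nonneg (heatKernel_nonneg _ _ _)]
      exact heatKernel_le_heatKernel_diag u y z)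

lemma integral_heatKernel_diag {a b : ℝ} (ha : 0 ≤ a) (hb : 0 ≤ b) (y : ℝ) :
    ∫ u in a..b, heatKernel u y y = 2 * (√(2 * π))⁻¹ * (√b - √a) := by
  rw [intervalIntegral.integral_congr (g := fun u => (√(2 * π))⁻¹ * u ^ (-(1 / 2) : ℝ))
      fun u hu => heatKernel_diag_eq_rpow (le_trans (le_min ha hb) hu.1) y,
    intervalIntegral.integral_const_mul, integral_rpow (by norm_num), Real.sqrt_eq_rpow a,
    Real.sqrt_eq_rpow b]
  norm_num
  ring

lemma integral_rpow_neg_three_halves_le {a b : ℝ} (ha : 0 < a) (hab : a ≤ b) :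
    ∫ u in a..b, u ^ (-(3 / 2) : ℝ) ≤ 2 / √a := by
  rw [integral_rpow (Or.inr ⟨by norm_num, notMem_uIcc_of_lt ha (ha.trans_le hab)⟩),
    Real.sqrt_eq_rpow, div_eq_mul_inv 2, ← Real.rpow_neg ha.le]
  have hb : 0 ≤ b ^ (-(1 / 2) : ℝ) := Real.rpow_nonneg (ha.le.trans hab) _
  norm_num
  linarith

lemma integral_heatKernel_diag_sub_le {a b : ℝ} (ha : 0 ≤ a) (hab : a ≤ b) (y z : ℝ) :
    ∫ u in a..b, (heatKernel u y y - heatKernel u y z) ≤ 3 * (√(2 * π))⁻¹ * |y - z| := by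
  rcases eq_or_ne y z with rfl | hyz
  · simp
  set δ := (y - z) ^ 2
  have hδ : 0 < δ := by positivity
  have hsqrtδ : √δ = |y - z| := Real.sqrt_sq_eq_abs _
  have hQ : ∀ {c d : ℝ}, 0 ≤ c → 0 ≤ d →
      IntervalIntegrable (fun u => heatKernel u y y - heatKernel u y z) volume c d :=
    fun hc hd => (intervalIntegrable_heatKernel_diag hc hd y).sub
      (intervalIntegrable_heatKernel_time hc hd y z)
  have hQ_nonneg : ∀ u, 0 ≤ heatKernel u y y - heatKernel u y z :=
    fun u => sub_nonneg.mpr (heatKernel_le_heatKernel_diag u y z)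
  have hB : 0 ≤ b + δ := by linarith
  calc ∫ u in a..b, (heatKernel u y y - heatKernel u y z)
      ≤ ∫ u in (0 : ℝ)..b + δ, (heatKernel u y y - heatKernel u y z) :=
        intervalIntegral.integral_mono_interval ha hab (by linarith)
          (ae_of_all _ hQ_nonneg) (hQ le_rfl hB)
    _ = (∫ u in (0 : ℝ)..δ, (heatKernel u y y - heatKernel u y z)) +
          ∫ u in δ..b + δ, (heatKernel u y y - heatKernel u y z) :=
        (intervalIntegral.integral_add_adjacent_intervals (hQ le_rfl hδ.le) (hQ hδ.le hB)).symm
    _ ≤ (∫ u in (0 : ℝ)..δ, heatKernel u y y) +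
          ∫ u in δ..b + δ, (√(2 * π))⁻¹ * (δ / 2) * u ^ (-(3 / 2) : ℝ) := by
        gcongr ?_ + ?_
        · exact intervalIntegral.integral_mono_on hδ.le (hQ le_rfl hδ.le)
            (intervalIntegrable_heatKernel_diag le_rfl hδ.le y)
            fun u _ => sub_le_self _ (heatKernel_nonneg _ _ _)
        · have hbδ : δ ≤ b + δ := le_add_of_nonneg_left (ha.trans hab)
          refine intervalIntegral.integral_mono_on hbδ (hQ hδ.le hB)
            ((intervalIntegral.intervalIntegrable_rpow
              (Or.inr (notMem_uIcc_of_lt hδ (hδ.trans_le hbδ)))).const_mul _)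
            fun u hu => heatKernel_diag_sub_le (hδ.trans_le hu.1) y z
    _ ≤ 2 * (√(2 * π))⁻¹ * √δ + (√(2 * π))⁻¹ * (δ / 2) * (2 / √δ) := by
        rw [integral_heatKernel_diag le_rfl hδ.le, intervalIntegral.integral_const_mul,
          Real.sqrt_zero, sub_zero]
        gcongr
        exact integral_rpow_neg_three_halves_le hδ (by linarith)
    _ = 3 * (√(2 * π))⁻¹ * |y - z| := by
        have hhalf : δ / 2 * (2 / √δ) = √δ := by
          rw [show δ / 2 * (2 / √δ) = δ / √δ by ring, Real.div_sqrt]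
        rw [mul_assoc _ (δ / 2), hhalf, hsqrtδ]
        ring

lemma intervalIntegrable_heatKernel_sub_two_mul {a b c : ℝ} (hab : a ≤ b) (hbc : 2 * b ≤ c)
    (y z : ℝ) : IntervalIntegrable (fun s => heatKernel (c - 2 * s) y z) volume a b := by
  have h := ((intervalIntegrable_heatKernel_time (by linarith : 0 ≤ c - 2 * b)
    (by linarith : 0 ≤ c - 2 * a) y z).comp_sub_left c).comp_mul_left (c := 2)
  simpa using h.symm

lemma integral_heatKernel_sub_two_mul (a b c y z : ℝ) :
    ∫ s in a..b, heatKernel (c - 2 * s) y z =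
      (∫ u in c - 2 * b..c - 2 * a, heatKernel u y z) / 2 := by
  rw [intervalIntegral.integral_comp_sub_mul (fun u => heatKernel u y z) two_ne_zero, smul_eq_mul,
    inv_mul_eq_div]

lemma integral_integral_heatKernel_sub_sq {r t : ℝ} (hr : 0 ≤ r) (hrt : r ≤ t) (y z : ℝ) :
    ∫ s in (0 : ℝ)..t, ∫ x, (heatKernel (t - s) x y - heatKernel (r - s) x z) ^ 2 =
      (∫ u in (0 : ℝ)..2 * t, heatKernel u y y) / 2 +
        (∫ u in (0 : ℝ)..2 * r, heatKernel u z z) / 2 - ∫ u in t - r..t + r, heatKernel u y z := by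
  set F := fun s => ∫ x, (heatKernel (t - s) x y - heatKernel (r - s) x z) ^ 2
  have hF_lt : EqOn F (fun s => heatKernel (2 * t - 2 * s) y y + heatKernel (2 * r - 2 * s) z z -
      2 * heatKernel (t + r - 2 * s) y z) (Ioo 0 r) := fun s hs => by
    simp only [F]
    rw [integral_heatKernel_sub_sq (by linarith [hs.2]) (by linarith [hs.2])]
    ring_nf
  have hF_ge : EqOn F (fun s => heatKernel (2 * t - 2 * s) y y) (uIcc r t) := fun s hs => by
    rw [uIcc_of_le hrt] at hs
    simp only [F]
    rw [integral_heatKernel_sub_sq_of_nonpos _ (by linarith [hs.1])]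
    ring_nf
  have hPt := intervalIntegrable_heatKernel_sub_two_mul hr (by linarith) y y (c := 2 * t)
  have hPr := intervalIntegrable_heatKernel_sub_two_mul hr le_rfl z z (c := 2 * r)
  have hG := intervalIntegrable_heatKernel_sub_two_mul hr (by linarith) y z (c := t + r)
  have hPt' := intervalIntegrable_heatKernel_sub_two_mul hrt le_rfl y y (c := 2 * t)
  have hE : IntervalIntegrable (fun s => heatKernel (2 * t - 2 * s) y y +
      heatKernel (2 * r - 2 * s) z z - 2 * heatKernel (t + r - 2 * s) y z) volume 0 r :=
    (hPt.add hPr).sub (hG.const_mul 2)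
  -- The formula for `s < r` fails at `s = r`, where `G(r - s, ·, z)` vanishes identically.
  rw [← intervalIntegral.integral_add_adjacent_intervals
      (hE.congr_uIoo ((uIoo_of_le hr).symm ▸ hF_lt.symm))
      (hPt'.congr (hF_ge.symm.mono uIoc_subset_uIcc)),
    intervalIntegral.integral_congr_Ioo_of_le hr hF_lt, intervalIntegral.integral_congr hF_ge,
    intervalIntegral.integral_sub (hPt.add hPr) (hG.const_mul 2),
    intervalIntegral.integral_add hPt hPr, intervalIntegral.integral_const_mul]
  have hsplit := intervalIntegral.integral_add_adjacent_intervals hPt hPt'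
  rw [integral_heatKernel_sub_two_mul 0 t] at hsplit
  rw [integral_heatKernel_sub_two_mul 0 r (2 * r), integral_heatKernel_sub_two_mul 0 r (t + r)]
  simp only [mul_zero, sub_zero, sub_self, show t + r - 2 * r = t - r by ring] at hsplit ⊢
  linarith

lemma sqrt_two_mul_add_sqrt_two_mul_le {a b : ℝ} (ha : 0 ≤ a) (hb : 0 ≤ b) :
    √(2 * a) + √(2 * b) ≤ 2 * √(a + b) := by
  rw [show 2 * √(a + b) = √(4 * (a + b)) by
    rw [Real.sqrt_mul (by norm_num), show (4 : ℝ) = 2 ^ 2 by norm_num, Real.sqrt_sq two_pos.le]]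
  apply Real.le_sqrt_of_sq_le
  nlinarith [Real.sq_sqrt (by positivity : 0 ≤ 2 * a), Real.sq_sqrt (by positivity : 0 ≤ 2 * b),
    sq_nonneg (√(2 * a) - √(2 * b))]

lemma integral_integral_heatKernel_sub_sq_le {r t : ℝ} (hr : 0 ≤ r) (hrt : r ≤ t) (y z : ℝ) :
    ∫ s in (0 : ℝ)..t, ∫ x, (heatKernel (t - s) x y - heatKernel (r - s) x z) ^ 2 ≤
      (√(2 * π))⁻¹ * (2 * √(t - r) + 3 * |y - z|) := by
  have htr : 0 ≤ t - r := sub_nonneg.mpr hrt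
  have hdefect := integral_heatKernel_diag_sub_le htr (by linarith : t - r ≤ t + r) y z
  rw [intervalIntegral.integral_sub (intervalIntegrable_heatKernel_diag htr (by linarith) y)
    (intervalIntegrable_heatKernel_time htr (by linarith) y z),
    integral_heatKernel_diag htr (by linarith) y] at hdefect
  rw [integral_integral_heatKernel_sub_sq hr hrt, integral_heatKernel_diag le_rfl (by linarith) y,
    integral_heatKernel_diag le_rfl (by linarith) z, Real.sqrt_zero]
  have hconcave := mul_le_mul_of_nonneg_left (sqrt_two_mul_add_sqrt_two_mul_le (hr.trans hrt) hr)
    (by positivity : 0 ≤ (√(2 * π))⁻¹)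
  linarith

/-- There is a constant `C > 0` such that for all `0 ≤ r ≤ t` and all `y, z ∈ ℝ`,
`∫₀ᵗ ∫_ℝ (G(t−s,x,y) − G(r−s,x,z))² dx ds ≤ C (√(t−r) + |y−z|)`. -/
theorem heatKernel_space_time_L2_modulus :
    ∃ C > (0 : ℝ), ∀ r t : ℝ, 0 ≤ r → r ≤ t → ∀ y z : ℝ,
      (∫ s in (0:ℝ)..t, ∫ x : ℝ, (heatKernel (t - s) x y - heatKernel (r - s) x z) ^ 2) ≤
        C * (Real.sqrt (t - r) + |y - z|) := by
  refine ⟨2, two_pos, fun r t hr hrt y z =>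
    (integral_integral_heatKernel_sub_sq_le hr hrt y z).trans ?_⟩
  have hc : (√(2 * π))⁻¹ ≤ 1 / 2 := by
    rw [inv_le_comm₀ (by positivity) one_half_pos, one_div, inv_inv]
    exact Real.le_sqrt_of_sq_le (by nlinarith [Real.pi_gt_three])
  have hbound := mul_le_mul_of_nonneg_right hc
    (by positivity : 0 ≤ 2 * √(t - r) + 3 * |y - z|)
  linarith [Real.sqrt_nonneg (t - r), abs_nonneg (y - z)]
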